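/- Let q be a prime power and S a subspace of GF(q)^n such that two coordinates i and j are in series in Matroid(S) (every circuit containing i also contains j and vice versa), and let S' be the projection of S obtained by dropping coordinate j. Then mult(S) is ideal if and only if mult(S') is ideal. -/

import Mathlib

open scoped Classical
noncomputable section

/-- Membership in the set covering polyhedron `Q(C)`. -/
def MemQ {V : Type*} (C : Finset (Finset V)) (x : V → ℝ) : Prop :=
  (∀ v, 0 ≤ x v) ∧ ∀ A ∈ C, 1 ≤ ∑ v ∈ A, x v

/-- An extreme point of `Q(C)`. -/
def IsExtremePt {V : Type*} (C : Finset (Finset V)) (x : V → ℝ) : Prop :=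
  MemQ C x ∧ ∀ y z : V → ℝ, MemQ C y → MemQ C z →
    (x = fun v => (y v + z v) / 2) → y = z

/-- A clutter is ideal if every extreme point of `Q(C)` is integral. -/
def IdealClutter {V : Type*} (C : Finset (Finset V)) : Prop :=
  ∀ x : V → ℝ, IsExtremePt C x → ∀ v, ∃ k : ℤ, x v = (k : ℝ)

/-- The support of a vector. -/
def suppF {ι : Type*} [Fintype ι] {F : Type*} [Zero F] (x : ι → F) : Finset ι :=
  Finset.univ.filter fun i => x i ≠ 0

/-- The circuits of `Matroid(S)`: the minimal supports of nonzero vectors of `S`. -/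
def circuitSet {F : Type*} [Field F] {ι : Type*} [Fintype ι] (S : Submodule F (ι → F)) :
    Set (Finset ι) :=
  {C | (∃ x ∈ S, x ≠ 0 ∧ suppF x = C) ∧
       ∀ C', (∃ x ∈ S, x ≠ 0 ∧ suppF x = C') → C' ⊆ C → C' = C}

/-- The multipartite uniform clutter of a subspace. -/
def multSub {F : Type*} [Field F] [Fintype F] {ι : Type*} [Fintype ι]
    (S : Submodule F (ι → F)) : Finset (Finset (Σ _ : ι, F)) :=
  (Finset.univ.filter fun x : ι → F => x ∈ S).image
    fun x => Finset.univ.image fun i => (⟨i, x i⟩ : Σ _ : ι, F)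

/-!
Since `i` and `j` are in series, every vector of `S` satisfies `x j = c * x i` for one fixed
`c ≠ 0`, so a member of `mult S` contains `(j, c * a)` exactly when it contains `(i, a)`: `mult S`
is the preimage of `mult S'` under the surjection `π` merging `(j, c * a)` into `(i, a)`.

Pulling a clutter back along a surjection preserves idealness. A point `x ≥ 0` lies in the
pulled-back polyhedron iff its fibre sums `π_* x` lie in `Q(C')`. An extreme point has at most one
nonzero entry in each fibre, hence is the extension by zero of `π_* x` along a section of `π`;
extension by zero along a section and `π_*` then exchange extreme points in both directions
without changing the nonzero values.
-/

section Pushforward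

variable {V V' : Type*} (π : V → V')

def extendAlong (s : V' → V) (y : V' → ℝ) (v : V) : ℝ := if s (π v) = v then y (π v) else 0

lemma extendAlong_midpoint (s : V' → V) (u w : V' → ℝ) :
    extendAlong π s (fun v' => (u v' + w v') / 2) =
      fun v => (extendAlong π s u v + extendAlong π s w v) / 2 := by
  funext v
  simp only [extendAlong]
  split_ifs <;> simp

variable [Fintype V]

def pushforward (x : V → ℝ) (v' : V') : ℝ := ∑ v with π v = v', x v

def preimageFinset (A' : Finset V') : Finset V := {v | π v ∈ A'}

def preimageClutter (C' : Finset (Finset V')) : Finset (Finset V) := C'.image (preimageFinset π)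

variable {π}

lemma pushforward_extendAlong {s : V' → V} (hs : ∀ v', π (s v') = v') (y : V' → ℝ) :
    pushforward π (extendAlong π s y) = y := by
  funext v'
  calc pushforward π (extendAlong π s y) v'
      = ∑ v with π v = v', if s v' = v then y v' else 0 :=
        Finset.sum_congr rfl fun v hv => by simp [extendAlong, (Finset.mem_filter.1 hv).2]
    _ = y v' := by simp [hs]

lemma extendAlong_pushforward {s : V' → V} {x : V → ℝ}
    (hx : ∀ v, x v ≠ 0 → s (π v) = v) : extendAlong π s (pushforward π x) = x := by
  funext v
  by_cases hv : s (π v) = v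
  · rw [extendAlong, if_pos hv, pushforward, Finset.sum_eq_single_of_mem v (by simp)]
    intro w hw hwv
    by_contra hxw
    exact hwv (by rw [← hx w hxw, (Finset.mem_filter.1 hw).2, hv])
  · rw [extendAlong, if_neg hv]
    exact (not_imp_comm.1 (hx v) hv).symm

lemma pushforward_midpoint (u w : V → ℝ) :
    pushforward π (fun v => (u v + w v) / 2) =
      fun v' => (pushforward π u v' + pushforward π w v') / 2 := by
  funext v'
  simp only [pushforward, ← Finset.sum_div, Finset.sum_add_distrib]

lemma sum_pushforward (x : V → ℝ) (A' : Finset V') :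
    ∑ v' ∈ A', pushforward π x v' = ∑ v ∈ preimageFinset π A', x v := by
  rw [preimageFinset,
    ← Finset.sum_fiberwise_of_maps_to (g := π) (fun v hv => (Finset.mem_filter.1 hv).2)]
  refine Finset.sum_congr rfl fun v' hv' => Finset.sum_congr ?_ fun _ _ => rfl
  ext v
  simp only [Finset.mem_filter, Finset.mem_univ, true_and]
  exact ⟨fun h => ⟨h ▸ hv', h⟩, And.right⟩

lemma pushforward_nonneg {x : V → ℝ} (hx : ∀ v, 0 ≤ x v) (v' : V') : 0 ≤ pushforward π x v' :=
  Finset.sum_nonneg fun v _ => hx v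

variable {C' : Finset (Finset V')}

lemma memQ_preimageClutter_iff {x : V → ℝ} :
    MemQ (preimageClutter π C') x ↔ (∀ v, 0 ≤ x v) ∧ MemQ C' (pushforward π x) := by
  simp only [MemQ, preimageClutter, Finset.forall_mem_image, sum_pushforward]
  exact ⟨fun h => ⟨h.1, pushforward_nonneg h.1, h.2⟩, fun h => ⟨h.1, h.2.2⟩⟩

lemma memQ_extendAlong {s : V' → V} (hs : ∀ v', π (s v') = v') {y : V' → ℝ} (hy : MemQ C' y) :
    MemQ (preimageClutter π C') (extendAlong π s y) := by
  refine memQ_preimageClutter_iff.2 ⟨fun v => ?_, by rwa [pushforward_extendAlong hs]⟩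
  unfold extendAlong
  split_ifs
  exacts [hy.1 _, le_rfl]

lemma IsExtremePt.eq_of_pushforward_eq {x u w : V → ℝ}
    (hx : IsExtremePt (preimageClutter π C') x) (hu : ∀ v, 0 ≤ u v) (hw : ∀ v, 0 ≤ w v)
    (hux : pushforward π u = pushforward π x) (hwx : pushforward π w = pushforward π x)
    (hmid : x = fun v => (u v + w v) / 2) : u = w :=
  have hxQ := (memQ_preimageClutter_iff.1 hx.1).2
  hx.2 u w (memQ_preimageClutter_iff.2 ⟨hu, hux ▸ hxQ⟩)
    (memQ_preimageClutter_iff.2 ⟨hw, hwx ▸ hxQ⟩) hmid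

/-- Otherwise mass could be shifted inside the fibre in both directions without changing the
pushforward. -/
lemma IsExtremePt.eq_of_ne_zero {x : V → ℝ} (hx : IsExtremePt (preimageClutter π C') x)
    {a b : V} (ha : x a ≠ 0) (hb : x b ≠ 0) (hab : π a = π b) : a = b := by
  by_contra hne
  have hx0 := (memQ_preimageClutter_iff.1 hx.1).1
  set ε := min (x a) (x b)
  have hε : 0 < ε := lt_min ((hx0 a).lt_of_ne' ha) ((hx0 b).lt_of_ne' hb)
  let shift (t : ℝ) (v : V) : ℝ := x v + t * ((if v = a then 1 else 0) - (if v = b then 1 else 0))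
  have shift_nonneg : ∀ t, |t| ≤ ε → ∀ v, 0 ≤ shift t v := by
    intro t ht v
    have := abs_le.1 ht
    have := min_le_left (x a) (x b)
    have := min_le_right (x a) (x b)
    by_cases hva : v = a
    · subst hva; simp only [shift, if_neg hne, ↓reduceIte]; linarith
    · by_cases hvb : v = b
      · subst hvb; simp only [shift, if_neg hva, ↓reduceIte]; linarith
      · simp only [shift, if_neg hva, if_neg hvb]; linarith [hx0 v]
  have pushforward_shift : ∀ t, pushforward π (shift t) = pushforward π x := by
    intro t
    funext v'
    simp only [shift, pushforward, Finset.sum_add_distrib, ← Finset.mul_sum,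
      Finset.sum_sub_distrib, Finset.sum_ite_eq', Finset.mem_filter, Finset.mem_univ, true_and,
      hab, sub_self, mul_zero, add_zero]
  have := congrFun (hx.eq_of_pushforward_eq (shift_nonneg ε (by rw [abs_of_pos hε]))
    (shift_nonneg (-ε) (by rw [abs_neg, abs_of_pos hε])) (pushforward_shift _)
    (pushforward_shift _) (by funext v; simp only [shift]; ring)) a
  simp only [shift, if_neg hne, ↓reduceIte] at this
  linarith

lemma IsExtremePt.exists_section (hπ : Function.Surjective π) {x : V → ℝ}
    (hx : IsExtremePt (preimageClutter π C') x) :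
    ∃ s : V' → V, (∀ v', π (s v') = v') ∧ ∀ v, x v ≠ 0 → s (π v) = v := by
  refine ⟨fun v' => if h : ∃ v, π v = v' ∧ x v ≠ 0 then h.choose else Function.surjInv hπ v',
    fun v' => ?_, fun v hv => ?_⟩
  · dsimp only
    split_ifs with h
    exacts [h.choose_spec.1, Function.surjInv_eq hπ v']
  · have h : ∃ w, π w = π v ∧ x w ≠ 0 := ⟨v, rfl, hv⟩
    dsimp only
    rw [dif_pos h]
    exact hx.eq_of_ne_zero h.choose_spec.2 hv h.choose_spec.1

lemma isExtremePt_extendAlong {s : V' → V} (hs : ∀ v', π (s v') = v') {y : V' → ℝ}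
    (hy : IsExtremePt C' y) : IsExtremePt (preimageClutter π C') (extendAlong π s y) := by
  refine ⟨memQ_extendAlong hs hy.1, fun u w hu hw hmid => ?_⟩
  have hu' := memQ_preimageClutter_iff.1 hu
  have hw' := memQ_preimageClutter_iff.1 hw
  have supported : ∀ z : V → ℝ, (∀ v, 0 ≤ z v) → (∀ v, z v ≤ 2 * extendAlong π s y v) →
      ∀ v, z v ≠ 0 → s (π v) = v := by
    intro z hz0 hzy v hzv
    by_contra hv
    have := hzy v
    simp only [extendAlong, if_neg hv, mul_zero] at this
    exact hzv (le_antisymm this (hz0 v))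
  have hu_le : ∀ v, u v ≤ 2 * extendAlong π s y v := fun v => by
    rw [hmid]; linarith [hw'.1 v]
  have hw_le : ∀ v, w v ≤ 2 * extendAlong π s y v := fun v => by
    rw [hmid]; linarith [hu'.1 v]
  have hpush : pushforward π u = pushforward π w := hy.2 _ _ hu'.2 hw'.2 (by
    rw [← pushforward_midpoint, ← hmid, pushforward_extendAlong hs])
  rw [← extendAlong_pushforward (supported u hu'.1 hu_le),
    ← extendAlong_pushforward (supported w hw'.1 hw_le), hpush]

lemma isExtremePt_pushforward (hπ : Function.Surjective π) {x : V → ℝ}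
    (hx : IsExtremePt (preimageClutter π C') x) : IsExtremePt C' (pushforward π x) := by
  obtain ⟨s, hs, hxs⟩ := hx.exists_section hπ
  refine ⟨(memQ_preimageClutter_iff.1 hx.1).2, fun y z hy hz hmid => ?_⟩
  have hlift := hx.2 _ _ (memQ_extendAlong hs hy) (memQ_extendAlong hs hz) (by
    rw [← extendAlong_midpoint, ← hmid, extendAlong_pushforward hxs])
  rw [← pushforward_extendAlong hs y, ← pushforward_extendAlong hs z, hlift]

theorem idealClutter_preimageClutter_iff (hπ : Function.Surjective π) :
    IdealClutter (preimageClutter π C') ↔ IdealClutter C' := by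
  constructor
  · intro h y hy v'
    have hs := Function.surjInv_eq hπ
    obtain ⟨k, hk⟩ := h _ (isExtremePt_extendAlong hs hy) (Function.surjInv hπ v')
    exact ⟨k, by simpa [extendAlong, hs] using hk⟩
  · intro h x hx v
    obtain ⟨s, hs, hxs⟩ := hx.exists_section hπ
    obtain ⟨k, hk⟩ := h _ (isExtremePt_pushforward hπ hx) (π v)
    rw [← extendAlong_pushforward hxs, extendAlong, hk]
    split_ifs
    exacts [⟨k, rfl⟩, ⟨0, by simp⟩]

end Pushforward

section Circuits

variable {F : Type*} [Field F] {ι : Type*}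

lemma sub_smul_apply_eq_zero (x z : ι → F) {m : ι} (hm : z m ≠ 0) :
    (x - (x m / z m) • z) m = 0 := by
  simp [hm]

variable [Fintype ι] {S : Submodule F (ι → F)}

lemma mem_suppF {x : ι → F} {k : ι} : k ∈ suppF x ↔ x k ≠ 0 := by simp [suppF]

lemma suppF_sub_smul_subset {x z : ι → F} (hzx : suppF z ⊆ suppF x) (c : F) :
    suppF (x - c • z) ⊆ suppF x := by
  intro l hl
  by_contra hxl
  have hzl : z l = 0 := by_contra fun h => hxl (hzx (mem_suppF.2 h))
  simp [mem_suppF, hzl, mem_suppF.not.1 hxl] at hl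

/-- If `suppF x` is not minimal, a vector `z` of strictly smaller support exists; either `z` or
`x` with a coordinate of `z` eliminated keeps the coordinate `k`. -/
lemma exists_apply_ne_zero_suppF_ssubset {x : ι → F} (hx : x ∈ S) {k : ι} (hk : x k ≠ 0)
    (hxC : suppF x ∉ circuitSet S) : ∃ y ∈ S, y k ≠ 0 ∧ suppF y ⊂ suppF x := by
  have hx0 : x ≠ 0 := fun h => hk (by simp [h])
  simp only [circuitSet, Set.mem_ofPred_eq, not_and, not_forall] at hxC
  obtain ⟨_, ⟨z, hzS, hz0, rfl⟩, hzx, hzx'⟩ := hxC ⟨x, hx, hx0, rfl⟩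
  have hzx : suppF z ⊂ suppF x := hzx.ssubset_of_ne hzx'
  by_cases hzk : z k ≠ 0
  · exact ⟨z, hzS, hzk, hzx⟩
  obtain ⟨m, hm⟩ := Function.ne_iff.1 hz0
  refine ⟨x - (x m / z m) • z, S.sub_mem hx (S.smul_mem _ hzS), by simpa [not_not.1 hzk],
    (suppF_sub_smul_subset hzx.subset _).ssubset_of_ne fun h => ?_⟩
  have hm' : m ∈ suppF (x - (x m / z m) • z) := h ▸ hzx.subset (mem_suppF.2 hm)
  exact mem_suppF.1 hm' (sub_smul_apply_eq_zero x z hm)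

lemma exists_circuit_mem_subset_suppF {x : ι → F} (hx : x ∈ S) {k : ι} (hk : x k ≠ 0) :
    ∃ C ∈ circuitSet S, k ∈ C ∧ C ⊆ suppF x := by
  induction hs : suppF x using Finset.strongInduction generalizing x with
  | H s ih =>
  subst hs
  by_cases hxC : suppF x ∈ circuitSet S
  · exact ⟨_, hxC, mem_suppF.2 hk, subset_rfl⟩
  obtain ⟨y, hyS, hyk, hyx⟩ := exists_apply_ne_zero_suppF_ssubset hx hk hxC
  obtain ⟨C, hC, hkC, hCy⟩ := ih _ hyx hyS hyk rfl
  exact ⟨C, hC, hkC, hCy.trans hyx.subset⟩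

lemma apply_ne_zero_of_series {i j : ι} (hseries : ∀ C ∈ circuitSet S, i ∈ C ↔ j ∈ C)
    {x : ι → F} (hx : x ∈ S) (hj : x j ≠ 0) : x i ≠ 0 := by
  obtain ⟨C, hC, hjC, hCx⟩ := exists_circuit_mem_subset_suppF hx hj
  exact mem_suppF.1 (hCx ((hseries C hC).2 hjC))

lemma exists_apply_eq_mul_of_series {i j : ι} (hseries : ∀ C ∈ circuitSet S, i ∈ C ↔ j ∈ C) :
    ∃ c : F, c ≠ 0 ∧ ∀ x ∈ S, x j = c * x i := by
  have hiff : ∀ x ∈ S, x i = 0 ↔ x j = 0 := fun x hx =>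
    ⟨not_imp_not.1 (apply_ne_zero_of_series hseries hx),
      not_imp_not.1 (apply_ne_zero_of_series (fun C hC => (hseries C hC).symm) hx)⟩
  by_cases hS : ∀ x ∈ S, x i = 0
  · exact ⟨1, one_ne_zero, fun x hx => by rw [(hiff x hx).1 (hS x hx), hS x hx, mul_zero]⟩
  push Not at hS
  obtain ⟨w, hwS, hwi⟩ := hS
  have hwj : w j ≠ 0 := (hiff w hwS).not.1 hwi
  refine ⟨w j / w i, div_ne_zero hwj hwi, fun x hx => ?_⟩
  have hz := (hiff _ (S.sub_mem hx (S.smul_mem (x i / w i) hwS))).1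
    (sub_smul_apply_eq_zero x w hwi)
  simp only [Pi.sub_apply, Pi.smul_apply, smul_eq_mul, sub_eq_zero] at hz
  rw [hz]
  field_simp

end Circuits

def graphFinset {ι F : Type*} [Fintype ι] (x : ι → F) : Finset (Σ _ : ι, F) :=
  Finset.univ.image fun k => ⟨k, x k⟩

lemma mk_mem_graphFinset {ι F : Type*} [Fintype ι] {x : ι → F} {k : ι} {a : F} :
    ⟨k, a⟩ ∈ graphFinset x ↔ x k = a := by
  simp [graphFinset]

lemma multSub_eq_image_graphFinset {F : Type*} [Field F] [Fintype F] {ι : Type*} [Fintype ι]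
    (S : Submodule F (ι → F)) : multSub S = ({x | x ∈ S} : Finset _).image graphFinset :=
  rfl

section Merge

variable {F : Type*} [Field F] {ι : Type*} [DecidableEq ι]

def mergeCoord {i j : ι} (hij : i ≠ j) (c : F) (v : Σ _ : ι, F) : Σ _ : {k : ι // k ≠ j}, F :=
  if h : v.1 = j then ⟨⟨i, hij⟩, c⁻¹ * v.2⟩ else ⟨⟨v.1, h⟩, v.2⟩

lemma mergeCoord_surjective {i j : ι} (hij : i ≠ j) (c : F) :
    Function.Surjective (mergeCoord hij c) :=
  fun ⟨⟨k, hk⟩, a⟩ => ⟨⟨k, a⟩, by simp [mergeCoord, hk]⟩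

variable [Fintype ι] [Fintype F]

lemma preimageFinset_mergeCoord_graphFinset {i j : ι} (hij : i ≠ j) {c : F} (hc : c ≠ 0)
    {x : ι → F} (hx : x j = c * x i) :
    preimageFinset (mergeCoord hij c) (graphFinset fun k : {k // k ≠ j} => x k) =
      graphFinset x := by
  ext ⟨k, a⟩
  by_cases hk : k = j
  · subst hk
    simp [preimageFinset, mergeCoord, mk_mem_graphFinset, hx, eq_inv_mul_iff_mul_eq₀ hc]
  · simp [preimageFinset, mergeCoord, hk, mk_mem_graphFinset]

lemma multSub_eq_preimageClutter {S : Submodule F (ι → F)} {i j : ι}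
    (hij : i ≠ j) {c : F} (hc : c ≠ 0) (hS : ∀ x ∈ S, x j = c * x i) :
    multSub S = preimageClutter (mergeCoord hij c)
      (multSub (S.map (LinearMap.funLeft F F (Subtype.val : {k : ι // k ≠ j} → ι)))) := by
  ext A
  simp only [multSub_eq_image_graphFinset, preimageClutter, Finset.mem_image, Finset.mem_filter,
    Finset.mem_univ, true_and, Submodule.mem_map]
  constructor
  · rintro ⟨x, hx, rfl⟩
    exact ⟨_, ⟨_, ⟨x, hx, rfl⟩, rfl⟩, preimageFinset_mergeCoord_graphFinset hij hc (hS x hx)⟩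
  · rintro ⟨_, ⟨_, ⟨x, hx, rfl⟩, rfl⟩, rfl⟩
    exact ⟨x, hx, (preimageFinset_mergeCoord_graphFinset hij hc (hS x hx)).symm⟩

end Merge

/-- let `S ⊆ GF(q)^n` be a subspace with coordinates `i ≠ j` in series in
`Matroid(S)` (every circuit contains both or neither), and let `S'` be the projection of
`S` dropping coordinate `j`.  Then `mult S` is ideal iff `mult S'` is ideal. -/
theorem stmt19 {F : Type*} [Field F] [Fintype F] {n : ℕ} (S : Submodule F (Fin n → F))
    (i j : Fin n) (hij : i ≠ j)
    (hseries : ∀ C ∈ circuitSet S, i ∈ C ↔ j ∈ C) :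
    IdealClutter (multSub S) ↔
      IdealClutter (multSub
        (S.map (LinearMap.funLeft F F (Subtype.val : {k : Fin n // k ≠ j} → Fin n)))) := by
  obtain ⟨c, hc, hS⟩ := exists_apply_eq_mul_of_series hseries
  rw [multSub_eq_preimageClutter hij hc hS]
  exact idealClutter_preimageClutter_iff (mergeCoord_surjective hij c)
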